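/- arXiv:1507.00301 — 3 statements merged into one kernel-verified Lean document; each statement's English description precedes it below -/
import Mathlib

section
/- Let W = a x₀² + b x₀x₁ + c x₁² be a binary quadratic form. The system x₀ ∂W/∂x₀ = 0 and x₁ ∂W/∂x₁ = 0 has a solution with (x₀, x₁) ≠ (0,0) if and only if a c (b² − 4ac) = 0. (This is the GKZ determinant E_ℬ = ac(b²−4ac) for the pointset ℬ = {0, 1, 2} ⊂ ℤ.) -/
/-! A nontrivial solution either lies on a coordinate axis, which forces `a = 0` or `c = 0`, or has
both coordinates nonzero, in which case both partial derivatives vanish there; the latter linear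
system has a nontrivial solution exactly when its determinant `4ac - b²` vanishes. -/

section QuadraticForm

variable {K : Type*} [Field K]

theorem discrim_eq_zero_of_partials_eq_zero {a b c x y : K} (hxy : ¬ (x = 0 ∧ y = 0))
    (hx : 2 * a * x + b * y = 0) (hy : b * x + 2 * c * y = 0) : b ^ 2 - 4 * a * c = 0 := by
  by_contra hD
  refine hxy ⟨?_, ?_⟩
  · refine (mul_eq_zero.1 ?_).resolve_left hD
    linear_combination b * hy - 2 * c * hx
  · refine (mul_eq_zero.1 ?_).resolve_left hD
    linear_combination b * hx - 2 * a * hy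

/-- When `a ≠ 0`, the kernel of `!![2a, b; b, 2c]` is spanned by `(-b, 2a)`. -/
theorem exists_partials_eq_zero_of_discrim_eq_zero {a b c : K} (h2 : (2 : K) ≠ 0)
    (hD : b ^ 2 - 4 * a * c = 0) :
    ∃ x y : K, ¬ (x = 0 ∧ y = 0) ∧ 2 * a * x + b * y = 0 ∧ b * x + 2 * c * y = 0 := by
  rcases eq_or_ne a 0 with rfl | ha
  · have hb : b = 0 := pow_eq_zero_iff two_ne_zero |>.1 (by linear_combination hD)
    exact ⟨1, 0, by simp, by simp [hb], by simp [hb]⟩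
  · exact ⟨-b, 2 * a, fun h => mul_ne_zero h2 ha h.2, by ring, by linear_combination -hD⟩

theorem exists_ne_zero_mul_partials_eq_zero_iff {a b c : K} (h2 : (2 : K) ≠ 0) :
    (∃ x₀ x₁ : K, ¬ (x₀ = 0 ∧ x₁ = 0) ∧
      x₀ * (2 * a * x₀ + b * x₁) = 0 ∧ x₁ * (b * x₀ + 2 * c * x₁) = 0) ↔
    a * c * (b ^ 2 - 4 * a * c) = 0 := by
  constructor
  · rintro ⟨x₀, x₁, hne, h₀, h₁⟩
    rcases eq_or_ne x₀ 0 with rfl | hx₀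
    · have hx₁ : x₁ ≠ 0 := fun h => hne ⟨rfl, h⟩
      have hc : c = 0 := by simpa [h2, hx₁] using h₁
      simp [hc]
    rcases eq_or_ne x₁ 0 with rfl | hx₁
    · have ha : a = 0 := by simpa [h2, hx₀] using h₀
      simp [ha]
    exact mul_eq_zero_of_right _ <| discrim_eq_zero_of_partials_eq_zero hne
      ((mul_eq_zero.1 h₀).resolve_left hx₀) ((mul_eq_zero.1 h₁).resolve_left hx₁)
  · intro h
    rcases mul_eq_zero.1 h with h | hD
    · rcases mul_eq_zero.1 h with ha | hc
      · exact ⟨1, 0, by simp, by simp [ha], by simp⟩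
      · exact ⟨0, 1, by simp, by simp, by simp [hc]⟩
    · obtain ⟨x, y, hxy, hx, hy⟩ := exists_partials_eq_zero_of_discrim_eq_zero h2 hD
      exact ⟨x, y, hxy, by simp [hx], by simp [hy]⟩

end QuadraticForm

/-- For the binary quadratic form `W = a x₀² + b x₀x₁ + c x₁²`, the system
`x₀ ∂W/∂x₀ = 0`, `x₁ ∂W/∂x₁ = 0` has a solution with `(x₀, x₁) ≠ (0,0)` if and only if
`a c (b² − 4ac) = 0`.  (This is the GKZ determinant `E_ℬ = ac(b²−4ac)` for
`ℬ = {0,1,2} ⊂ ℤ`.) -/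
theorem statement11 (a b c : ℂ) :
    (∃ x₀ x₁ : ℂ, ¬ (x₀ = 0 ∧ x₁ = 0) ∧
      x₀ * (2 * a * x₀ + b * x₁) = 0 ∧ x₁ * (b * x₀ + 2 * c * x₁) = 0) ↔
    a * c * (b ^ 2 - 4 * a * c) = 0 :=
  exists_ne_zero_mul_partials_eq_zero_iff two_ne_zero
end

section
/- For the superpotential W = a x³ + b y³ + c z³ + d xyz on ℂ³, the system x ∂W/∂x = y ∂W/∂y = z ∂W/∂z = 0 has a solution with (x,y,z) ≠ (0,0,0) if and only if a²b²c²(d³ + 27abc) = 0. -/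
/-!
If `abc ≠ 0`, a nontrivial solution cannot have a zero coordinate (one zero coordinate kills the
`d x y z` terms, and then `3 a x³ = 3 b y³ = 3 c z³ = 0`), and on the torus the three equations
`3 a x² + d y z = 0`, ... eliminate to `(d³ + 27 a b c) (x y z)² = 0`. Conversely, if `a = 0` then
`(1, 0, 0)` is a solution, and if `d³ = -27 a b c` with `a b c ≠ 0` then, for a cube root `z` of
`a / c`, the point `(d, -3 c z², d z)` is one.
-/

variable {K : Type*}

/-- `x ∂W/∂x = y ∂W/∂y = z ∂W/∂z = 0` for `W = a x³ + b y³ + c z³ + d x y z`. -/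
def IsLogCriticalPoint [CommRing K] (a b c d x y z : K) : Prop :=
  x * (3 * a * x ^ 2 + d * y * z) = 0 ∧
    y * (3 * b * y ^ 2 + d * x * z) = 0 ∧
    z * (3 * c * z ^ 2 + d * x * y) = 0

section CommRing

variable [CommRing K] {a b c d x y z : K}

theorem discriminant_mul_sq_eq_zero (hx : 3 * a * x ^ 2 + d * y * z = 0)
    (hy : 3 * b * y ^ 2 + d * x * z = 0) (hz : 3 * c * z ^ 2 + d * x * y = 0) :
    (d ^ 3 + 27 * a * b * c) * (x * y * z) ^ 2 = 0 := by
  linear_combination (9 * b * c * y ^ 2 * z ^ 2) * hx - (3 * c * d * y * z ^ 3) * hy +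
    (d ^ 2 * x * y * z ^ 2) * hz

theorem isLogCriticalPoint_one_zero_zero (ha : a = 0) : IsLogCriticalPoint a b c d 1 0 0 := by
  simp [IsLogCriticalPoint, ha]

theorem isLogCriticalPoint_zero_one_zero (hb : b = 0) : IsLogCriticalPoint a b c d 0 1 0 := by
  simp [IsLogCriticalPoint, hb]

theorem isLogCriticalPoint_zero_zero_one (hc : c = 0) : IsLogCriticalPoint a b c d 0 0 1 := by
  simp [IsLogCriticalPoint, hc]

theorem isLogCriticalPoint_of_cube_root (hdisc : d ^ 3 + 27 * a * b * c = 0)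
    (hz : c * z ^ 3 = a) : IsLogCriticalPoint a b c d d (-3 * c * z ^ 2) (d * z) := by
  refine ⟨?_, ?_, ?_⟩
  · linear_combination (-3 * d ^ 3) * hz
  · linear_combination (-3 * a) * hdisc + (-3 * d ^ 3 - 81 * b * c * (c * z ^ 3 + a)) * hz
  · ring

end CommRing

section Field

variable [Field K] [NeZero (3 : K)] {a b c d x y z : K}

theorem eq_zero_of_mul_three_mul_sq_eq_zero (ha : a ≠ 0) (h : x * (3 * a * x ^ 2) = 0) :
    x = 0 := by
  simpa [ha, NeZero.ne] using h

theorem IsLogCriticalPoint.eq_zero_of_eq_zero (h : IsLogCriticalPoint a b c d x y z)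
    (ha : a ≠ 0) (hb : b ≠ 0) (hc : c ≠ 0) (hxyz : x * y * z = 0) :
    x = 0 ∧ y = 0 ∧ z = 0 := by
  obtain ⟨h₁, h₂, h₃⟩ := h
  have hx : x = 0 := by
    apply eq_zero_of_mul_three_mul_sq_eq_zero ha
    obtain (rfl | rfl) | rfl := by simpa only [mul_eq_zero] using hxyz
    · simp
    all_goals simpa using h₁
  subst hx
  exact ⟨rfl, eq_zero_of_mul_three_mul_sq_eq_zero hb (by simpa using h₂),
    eq_zero_of_mul_three_mul_sq_eq_zero hc (by simpa using h₃)⟩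

theorem IsLogCriticalPoint.discriminant_eq_zero (h : IsLogCriticalPoint a b c d x y z)
    (hne : ¬(x = 0 ∧ y = 0 ∧ z = 0)) :
    a ^ 2 * b ^ 2 * c ^ 2 * (d ^ 3 + 27 * a * b * c) = 0 := by
  by_cases habc : a = 0 ∨ b = 0 ∨ c = 0
  · rcases habc with rfl | rfl | rfl <;> ring
  simp only [not_or] at habc
  obtain ⟨ha, hb, hc⟩ := habc
  have hxyz : x * y * z ≠ 0 := fun h0 => hne (h.eq_zero_of_eq_zero ha hb hc h0)
  obtain ⟨h₁, h₂, h₃⟩ := h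
  have key := discriminant_mul_sq_eq_zero
    ((mul_eq_zero.mp h₁).resolve_left (left_ne_zero_of_mul (left_ne_zero_of_mul hxyz)))
    ((mul_eq_zero.mp h₂).resolve_left (right_ne_zero_of_mul (left_ne_zero_of_mul hxyz)))
    ((mul_eq_zero.mp h₃).resolve_left (right_ne_zero_of_mul hxyz))
  simp [(mul_eq_zero.mp key).resolve_right (pow_ne_zero 2 hxyz)]

theorem exists_isLogCriticalPoint_of_discriminant_eq_zero [IsAlgClosed K]
    (h : a ^ 2 * b ^ 2 * c ^ 2 * (d ^ 3 + 27 * a * b * c) = 0) :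
    ∃ x y z : K, ¬(x = 0 ∧ y = 0 ∧ z = 0) ∧ IsLogCriticalPoint a b c d x y z := by
  by_cases habc : a = 0 ∨ b = 0 ∨ c = 0
  · rcases habc with ha | hb | hc
    · exact ⟨1, 0, 0, by simp, isLogCriticalPoint_one_zero_zero ha⟩
    · exact ⟨0, 1, 0, by simp, isLogCriticalPoint_zero_one_zero hb⟩
    · exact ⟨0, 0, 1, by simp, isLogCriticalPoint_zero_zero_one hc⟩
  simp only [not_or] at habc
  obtain ⟨ha, hb, hc⟩ := habc
  have hdisc : d ^ 3 + 27 * a * b * c = 0 := by simpa [ha, hb, hc] using h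
  have hd : d ≠ 0 := by
    rintro rfl
    have : (3 : K) ^ 3 * a * b * c = 0 := by linear_combination hdisc
    simp [ha, hb, hc, NeZero.ne] at this
  obtain ⟨z, hz⟩ := IsAlgClosed.exists_pow_nat_eq (a / c) three_pos
  exact ⟨d, -3 * c * z ^ 2, d * z, by simp [hd],
    isLogCriticalPoint_of_cube_root hdisc (by rw [hz]; field_simp)⟩

theorem exists_isLogCriticalPoint_iff [IsAlgClosed K] :
    (∃ x y z : K, ¬(x = 0 ∧ y = 0 ∧ z = 0) ∧ IsLogCriticalPoint a b c d x y z) ↔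
      a ^ 2 * b ^ 2 * c ^ 2 * (d ^ 3 + 27 * a * b * c) = 0 :=
  ⟨fun ⟨_, _, _, hne, h⟩ => h.discriminant_eq_zero hne,
    exists_isLogCriticalPoint_of_discriminant_eq_zero⟩

end Field

/-- For the superpotential `W = a x³ + b y³ + c z³ + d xyz` on `ℂ³`, the
system `x ∂W/∂x = y ∂W/∂y = z ∂W/∂z = 0` has a solution with `(x,y,z) ≠ (0,0,0)` if and
only if `a²b²c²(d³ + 27abc) = 0`. -/
theorem statement12 (a b c d : ℂ) :
    (∃ x y z : ℂ, ¬ (x = 0 ∧ y = 0 ∧ z = 0) ∧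
      x * (3 * a * x ^ 2 + d * y * z) = 0 ∧
      y * (3 * b * y ^ 2 + d * x * z) = 0 ∧
      z * (3 * c * z ^ 2 + d * x * y) = 0) ↔
    a ^ 2 * b ^ 2 * c ^ 2 * (d ^ 3 + 27 * a * b * c) = 0 :=
  exists_isLogCriticalPoint_iff
end

section
/- Let 𝒜 ⊂ ℤ⁵ be the 5-point set with rows (1,−1,−1,−1,−1), (1,3,0,−1,−1), (1,−1,3,0,−1), (1,−1,−1,3,0), (1,−1,−1,−1,3). Then the dual cone of Cone(Conv 𝒜), intersected with the dual lattice ℤ⁵ and the hyperplane {m : m·(1,0,0,0,0) = 1}, consists of exactly the six points (1,0,0,0,0), (1,1,0,0,0), (1,0,1,0,0), (1,0,0,1,0), (1,0,0,0,1), (1,−1,−1,−1,−1). -/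
open Matrix

/-- Embedding of the lattice `ℤ^d` into `ℝ^d`. -/
def castVec (d : ℕ) (v : Fin d → ℤ) : Fin d → ℝ := fun i => (v i : ℝ)

/-- The convex cone `Cone(Conv S)` generated by a set `S ⊂ ℝ^d`. -/
def coneGen (d : ℕ) (S : Set (Fin d → ℝ)) : Set (Fin d → ℝ) :=
  {x | ∃ (t : Finset (Fin d → ℝ)) (c : (Fin d → ℝ) → ℝ),
    ↑t ⊆ S ∧ (∀ v, 0 ≤ c v) ∧ x = ∑ v ∈ t, c v • v}


set_option maxHeartbeats 2000000

lemma mem_coneGen_self {d : ℕ} {S : Set (Fin d → ℝ)} {a : Fin d → ℝ} (h : a ∈ S) :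
    a ∈ coneGen d S :=
  ⟨{a}, fun _ => 1, by simpa using h, fun _ => zero_le_one, by simp⟩

lemma coneGen_dual {d : ℕ} {S : Set (Fin d → ℝ)} {m : Fin d → ℝ}
    (h : ∀ a ∈ S, 0 ≤ m ⬝ᵥ a) : ∀ v ∈ coneGen d S, 0 ≤ m ⬝ᵥ v := by
  rintro v ⟨t, c, hts, hc, rfl⟩
  have : m ⬝ᵥ (∑ a ∈ t, c a • a) = ∑ a ∈ t, c a * (m ⬝ᵥ a) := by
    simp only [dotProduct, Finset.sum_apply, Pi.smul_apply, smul_eq_mul, Finset.mul_sum]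
    rw [Finset.sum_comm]
    congr 1; ext a; congr 1; ext i; ring
  rw [this]
  exact Finset.sum_nonneg fun a ha => mul_nonneg (hc a) (h a (hts ha))

lemma castVec_dot (m a : Fin 5 → ℤ) :
    castVec 5 m ⬝ᵥ castVec 5 a = ((m ⬝ᵥ a : ℤ) : ℝ) := by
  simp [castVec, dotProduct]

/-- For the 5-point set `𝒜 ⊂ ℤ⁵` with points `(1,−1,−1,−1,−1)`,
`(1,3,0,−1,−1)`, `(1,−1,3,0,−1)`, `(1,−1,−1,3,0)`, `(1,−1,−1,−1,3)` (the Berglund–Hübsch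
quintic data), the dual cone of `Cone(Conv 𝒜)` intersected with the dual lattice `ℤ⁵` and
the hyperplane `{m : ⟨m, (1,0,0,0,0)⟩ = 1}` consists of exactly the six points
`(1,0,0,0,0)`, `(1,1,0,0,0)`, `(1,0,1,0,0)`, `(1,0,0,1,0)`, `(1,0,0,0,1)`,
`(1,−1,−1,−1,−1)` — the quintic data. -/
theorem statement17 (𝒜 : Set (Fin 5 → ℤ))
    (h𝒜 : 𝒜 = {![1,-1,-1,-1,-1], ![1,3,0,-1,-1], ![1,-1,3,0,-1], ![1,-1,-1,3,0],
      ![1,-1,-1,-1,3]}) :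
    {m : Fin 5 → ℤ |
        (∀ v ∈ coneGen 5 (castVec 5 '' 𝒜), 0 ≤ castVec 5 m ⬝ᵥ v) ∧
        m ⬝ᵥ ![1,0,0,0,0] = 1} =
      ({![1,0,0,0,0], ![1,1,0,0,0], ![1,0,1,0,0], ![1,0,0,1,0], ![1,0,0,0,1],
        ![1,-1,-1,-1,-1]} : Set (Fin 5 → ℤ)) := by
  subst h𝒜
  ext m
  simp only [Set.mem_setOf_eq, Set.mem_insert_iff, Set.mem_singleton_iff]
  constructor
  · rintro ⟨h, h0⟩
    have key : ∀ a ∈ ({![1,-1,-1,-1,-1], ![1,3,0,-1,-1], ![1,-1,3,0,-1], ![1,-1,-1,3,0],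
        ![1,-1,-1,-1,3]} : Set (Fin 5 → ℤ)), (0:ℤ) ≤ m ⬝ᵥ a := by
      intro a ha
      have := h (castVec 5 a) (mem_coneGen_self (Set.mem_image_of_mem _ ha))
      rw [castVec_dot] at this
      exact_mod_cast this
    have h1 := key ![1,-1,-1,-1,-1] (by simp)
    have h2 := key ![1,3,0,-1,-1] (by simp)
    have h3 := key ![1,-1,3,0,-1] (by simp)
    have h4 := key ![1,-1,-1,3,0] (by simp)
    have h5 := key ![1,-1,-1,-1,3] (by simp)
    simp only [dotProduct, Fin.sum_univ_five, Matrix.cons_val_zero, Matrix.cons_val_one,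
      Matrix.head_cons, Matrix.cons_val_two, Matrix.tail_cons, Matrix.cons_val_three,
      Matrix.cons_val_four] at h0 h1 h2 h3 h4 h5
    have hd : (m 0 = 1 ∧ m 1 = 0 ∧ m 2 = 0 ∧ m 3 = 0 ∧ m 4 = 0) ∨
        (m 0 = 1 ∧ m 1 = 1 ∧ m 2 = 0 ∧ m 3 = 0 ∧ m 4 = 0) ∨
        (m 0 = 1 ∧ m 1 = 0 ∧ m 2 = 1 ∧ m 3 = 0 ∧ m 4 = 0) ∨
        (m 0 = 1 ∧ m 1 = 0 ∧ m 2 = 0 ∧ m 3 = 1 ∧ m 4 = 0) ∨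
        (m 0 = 1 ∧ m 1 = 0 ∧ m 2 = 0 ∧ m 3 = 0 ∧ m 4 = 1) ∨
        (m 0 = 1 ∧ m 1 = -1 ∧ m 2 = -1 ∧ m 3 = -1 ∧ m 4 = -1) := by omega
    rcases hd with ⟨e0,e1,e2,e3,e4⟩|⟨e0,e1,e2,e3,e4⟩|⟨e0,e1,e2,e3,e4⟩|⟨e0,e1,e2,e3,e4⟩|
      ⟨e0,e1,e2,e3,e4⟩|⟨e0,e1,e2,e3,e4⟩
    · exact Or.inl (by funext i; fin_cases i <;> simp [e0,e1,e2,e3,e4])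
    · exact Or.inr (Or.inl (by funext i; fin_cases i <;> simp [e0,e1,e2,e3,e4]))
    · exact Or.inr (Or.inr (Or.inl (by funext i; fin_cases i <;> simp [e0,e1,e2,e3,e4])))
    · exact Or.inr (Or.inr (Or.inr (Or.inl (by funext i; fin_cases i <;> simp [e0,e1,e2,e3,e4]))))
    · exact Or.inr (Or.inr (Or.inr (Or.inr (Or.inl (by funext i; fin_cases i <;> simp [e0,e1,e2,e3,e4])))))
    · exact Or.inr (Or.inr (Or.inr (Or.inr (Or.inr (by funext i; fin_cases i <;> simp [e0,e1,e2,e3,e4])))))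
  · intro hm
    constructor
    · apply coneGen_dual
      rintro a ⟨b, hb, rfl⟩
      rw [show castVec 5 m ⬝ᵥ castVec 5 b = ((m ⬝ᵥ b : ℤ) : ℝ) from castVec_dot m b]
      have : (0:ℤ) ≤ m ⬝ᵥ b := by
        rcases hm with rfl|rfl|rfl|rfl|rfl|rfl <;>
          rcases hb with rfl|rfl|rfl|rfl|rfl <;>
            simp [dotProduct, Fin.sum_univ_five]
      exact_mod_cast this
    · rcases hm with rfl|rfl|rfl|rfl|rfl|rfl <;> simp [dotProduct, Fin.sum_univ_five]
end
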